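/- Let ⟨W,D⟩ be a default theory and E a set of formulae. Define E₀ = W and E_{i+1} = Th(E_i) ∪ {γ | (α,β,γ) ∈ D, α ∈ E_i and ¬β ∉ E}. Then E is a stable extension of ⟨W,D⟩ if and only if E = ⋃_{i∈ℕ} E_i. -/

import Mathlib

/-!
The iterates `Eᵢ` increase, so their union `U` contains `W` and is closed under the defaults
applicable with respect to `E`, and every set with these closure properties contains each `Eᵢ`.
The one real point is that `U` is deductively closed, which is compactness of propositional
logic: if `U ⊨ φ` but no `Eᵢ ⊨ φ`, the sets of valuations satisfying `Eᵢ` and falsifying `φ` form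
a decreasing chain of nonempty closed subsets of the compact space `ℕ → Bool`, and a valuation
in their intersection is a counter-model of `U ⊨ φ`. Hence `U` is the least `Γ`-closed set,
i.e. `U = Γ(E)`.
-/

inductive Form : Type where
  | var : ℕ → Form
  | app : (n : ℕ) → ((Fin n → Bool) → Bool) → (Fin n → Form) → Form

namespace Form

def eval (σ : ℕ → Bool) : Form → Bool
  | var x => σ x
  | app _ f a => f (fun i => (a i).eval σ)

def tru : Form := app 0 (fun _ => true) (fun i => i.elim0)
def fls : Form := app 0 (fun _ => false) (fun i => i.elim0)
def neg (φ : Form) : Form := app 1 (fun v => !(v 0)) (fun _ => φ)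
def conj (φ ψ : Form) : Form := app 2 (fun v => v 0 && v 1) ![φ, ψ]
def disj (φ ψ : Form) : Form := app 2 (fun v => v 0 || v 1) ![φ, ψ]

end Form

/-- σ satisfies all formulae of A. -/
def Sat (σ : ℕ → Bool) (A : Set Form) : Prop := ∀ φ ∈ A, φ.eval σ = true

/-- Semantic consequence A ⊨ φ. -/
def Entails (A : Set Form) (φ : Form) : Prop := ∀ σ, Sat σ A → φ.eval σ = true

/-- Th(A) = {φ | A ⊨ φ}. -/
def Th (A : Set Form) : Set Form := {φ | Entails A φ}

def Consistent (A : Set Form) : Prop := ∃ σ, Sat σ A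

/-- A default rule (α : β / γ). -/
structure Default where
  pre : Form
  just : Form
  con : Form

/-- S contains W, is deductively closed, and closed under defaults applicable w.r.t. E. -/
def GammaClosed (W : Set Form) (D : Set Default) (E S : Set Form) : Prop :=
  W ⊆ S ∧ Th S = S ∧ ∀ d ∈ D, d.pre ∈ S → Form.neg d.just ∉ E → d.con ∈ S

/-- Γ(E): the smallest set satisfying the three closure conditions. -/
def Gamma (W : Set Form) (D : Set Default) (E : Set Form) : Set Form :=
  ⋂₀ {S | GammaClosed W D E S}

/-- E is a stable extension of ⟨W,D⟩. -/
def Stable (W : Set Form) (D : Set Default) (E : Set Form) : Prop :=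
  Gamma W D E = E

open Set

theorem Form.continuous_eval (φ : Form) : Continuous fun σ : ℕ → Bool => φ.eval σ := by
  induction φ with
  | var x => exact continuous_apply x
  | app n f a ih =>
    exact continuous_of_discreteTopology.comp (continuous_pi ih)

theorem isClosed_setOf_sat (A : Set Form) : IsClosed {σ | Sat σ A} := by
  simp only [Sat, ofPred_forall]
  exact isClosed_biInter fun φ _ => isClosed_eq φ.continuous_eval continuous_const

theorem subset_Th (A : Set Form) : A ⊆ Th A := fun _ hφ _ hσ => hσ _ hφ

theorem Th_mono {A B : Set Form} (h : A ⊆ B) : Th A ⊆ Th B :=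
  fun _ hφ σ hσ => hφ σ fun _ hψ => hσ _ (h hψ)

theorem Th_iUnion_subset_of_directed {ι : Type*} [Nonempty ι] {A : ι → Set Form}
    (hA : Directed (· ⊆ ·) A) : Th (⋃ i, A i) ⊆ ⋃ i, Th (A i) := by
  intro φ hφ
  by_contra hnot
  simp only [mem_iUnion, not_exists] at hnot
  set K : ι → Set (ℕ → Bool) := fun i => {σ | Sat σ (A i)} ∩ {σ | φ.eval σ = false}
  have hK_closed i : IsClosed (K i) :=
    (isClosed_setOf_sat _).inter (isClosed_eq φ.continuous_eval continuous_const)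
  have hK_nonempty i : (K i).Nonempty := by
    obtain ⟨σ, hσ, hφσ⟩ : ∃ σ, Sat σ (A i) ∧ φ.eval σ ≠ true := by
      simpa [Th, Entails] using hnot i
    exact ⟨σ, hσ, by simpa using hφσ⟩
  have hK_directed : Directed (· ⊇ ·) K := fun i j =>
    let ⟨k, hik, hjk⟩ := hA i j
    ⟨k, fun _ hσ => ⟨fun ψ hψ => hσ.1 ψ (hik hψ), hσ.2⟩,
      fun _ hσ => ⟨fun ψ hψ => hσ.1 ψ (hjk hψ), hσ.2⟩⟩
  obtain ⟨σ, hσK⟩ := IsCompact.nonempty_iInter_of_directed_nonempty_isCompact_isClosed K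
    hK_directed hK_nonempty (fun i => (hK_closed i).isCompact) hK_closed
  have hσ := mem_iInter.mp hσK
  have hsat : Sat σ (⋃ i, A i) := fun ψ hψ =>
    let ⟨i, hi⟩ := mem_iUnion.mp hψ
    (hσ i).1 ψ hi
  exact Bool.false_ne_true ((hσ (Classical.arbitrary ι)).2.symm.trans (hφ σ hsat))

def reiterStep (D : Set Default) (E A : Set Form) : Set Form :=
  Th A ∪ {γ | ∃ d ∈ D, d.con = γ ∧ d.pre ∈ A ∧ Form.neg d.just ∉ E}

section Iteration

variable {W : Set Form} {D : Set Default} {E : Set Form} {Es : ℕ → Set Form}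

theorem monotone_of_reiterStep (hs : ∀ i, Es (i + 1) = reiterStep D E (Es i)) : Monotone Es :=
  monotone_nat_of_le_succ fun i => hs i ▸ subset_union_of_subset_left (subset_Th _) _

theorem Th_iUnion_of_reiterStep (hs : ∀ i, Es (i + 1) = reiterStep D E (Es i)) :
    Th (⋃ i, Es i) = ⋃ i, Es i := by
  refine (subset_Th _).antisymm' fun φ hφ => ?_
  obtain ⟨i, hi⟩ := mem_iUnion.mp
    (Th_iUnion_subset_of_directed (monotone_of_reiterStep hs).directed_le hφ)
  exact mem_iUnion.mpr ⟨i + 1, hs i ▸ Or.inl hi⟩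

theorem gammaClosed_iUnion_of_reiterStep (h0 : Es 0 = W)
    (hs : ∀ i, Es (i + 1) = reiterStep D E (Es i)) : GammaClosed W D E (⋃ i, Es i) := by
  refine ⟨h0 ▸ subset_iUnion Es 0, Th_iUnion_of_reiterStep hs, fun d hd hpre hjust => ?_⟩
  obtain ⟨i, hi⟩ := mem_iUnion.mp hpre
  exact mem_iUnion.mpr ⟨i + 1, hs i ▸ Or.inr ⟨d, hd, rfl, hi, hjust⟩⟩

theorem iUnion_subset_of_gammaClosed (h0 : Es 0 = W)
    (hs : ∀ i, Es (i + 1) = reiterStep D E (Es i)) {S : Set Form}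
    (hS : GammaClosed W D E S) : ⋃ i, Es i ⊆ S := by
  obtain ⟨hWS, hThS, hDS⟩ := hS
  refine iUnion_subset fun i => ?_
  induction i with
  | zero => exact h0 ▸ hWS
  | succ i ih =>
    rw [hs i]
    rintro φ (hφ | ⟨d, hd, rfl, hpre, hjust⟩)
    · exact hThS ▸ Th_mono ih hφ
    · exact hDS d hd (ih hpre) hjust

theorem gamma_eq_iUnion_of_reiterStep (h0 : Es 0 = W)
    (hs : ∀ i, Es (i + 1) = reiterStep D E (Es i)) : Gamma W D E = ⋃ i, Es i :=
  IsLeast.csInf_eq ⟨gammaClosed_iUnion_of_reiterStep h0 hs,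
    fun _ hS => iUnion_subset_of_gammaClosed h0 hs hS⟩

end Iteration

theorem stmt4_general (W : Set Form) (D : Set Default) (E : Set Form)
    (Es : ℕ → Set Form) (h0 : Es 0 = W)
    (hs : ∀ i, Es (i + 1) =
      Th (Es i) ∪ {γ | ∃ d ∈ D, d.con = γ ∧ d.pre ∈ Es i ∧ Form.neg d.just ∉ E}) :
    Stable W D E ↔ E = ⋃ i, Es i := by
  rw [Stable, gamma_eq_iUnion_of_reiterStep h0 hs]
  exact eq_comm

/-- Reiter's iterative characterization of stable extensions. -/
theorem stmt4 (W : Set Form) (D : Set Default) (hD : D.Finite) (E : Set Form)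
    (Es : ℕ → Set Form) (h0 : Es 0 = W)
    (hs : ∀ i, Es (i + 1) =
      Th (Es i) ∪ {γ | ∃ d ∈ D, d.con = γ ∧ d.pre ∈ Es i ∧ Form.neg d.just ∉ E}) :
    Stable W D E ↔ E = ⋃ i, Es i :=
  stmt4_general W D E Es h0 hs
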